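/- Let (X, t, r, d, ∂̃) be a dihedral module with ∞-simplicial faces and define d_1^k = Σ_{0 ≤ i_1 < ... < i_k ≤ n-1} (-1)^{i_1+...+i_k} ∂_(i_1,...,i_k) : X_{n,•} → X_{n-k,•+k-1}, T_n = (-1)^n t_n, R_n = (-1)^{n(n+1)/2} r_n. Then d_1^k ∘ (R_n T_n) = (R_{n-k} T_{n-k}) ∘ d_1^k for all k ≥ 1 and n ≥ 1. -/

import Mathlib

open scoped Classical

/-!
By (1.3) and then (1.2) in the case `i₁ > 0` (applicable because `n - i_k ≥ 1`), `r_n t_n` carries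
`∂_(i₁,…,i_k)` to `± r_{n-k} t_{n-k} ∂_(n-1-i_k,…,n-1-i₁)`. The index map
`(i₁,…,i_k) ↦ (n-1-i_k,…,n-1-i₁)` is an involution of the index set of `d₁^k` which changes
`i₁+⋯+i_k` into `k(n-1) - (i₁+⋯+i_k)`, so reindexing the sum along it turns one side into the
other; the signs agree because `n(n+1)/2 + n + k(k-1)/2 ≡ (n-k)(n-k+1)/2 + (n-k) + k(n-1)` mod 2.
-/

namespace LinearMap

variable {R A B C ι : Type*} [CommSemiring R] [AddCommMonoid A] [AddCommMonoid B]
  [AddCommMonoid C] [Module R A] [Module R B] [Module R C]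

theorem finsetSum_comp (s : Finset ι) (f : ι → B →ₗ[R] C) (g : A →ₗ[R] B) :
    (∑ i ∈ s, f i).comp g = ∑ i ∈ s, (f i).comp g :=
  map_sum (lcomp R C g) f s

theorem comp_finsetSum (s : Finset ι) (g : B →ₗ[R] C) (f : ι → A →ₗ[R] B) :
    g.comp (∑ i ∈ s, f i) = ∑ i ∈ s, g.comp (f i) :=
  map_sum (llcomp R A B C g) f s

end LinearMap

theorem triangle_add_exponent (m k : ℕ) :
    (m + k) * (m + k + 1) / 2 + (m + k) + k * (k - 1) / 2 =
      m * (m + 1) / 2 + m + k * (m + k - 1) + 2 * k := by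
  have two_mul_triangle (x : ℕ) : 2 * (x * (x + 1) / 2) = x * (x + 1) :=
    Nat.two_mul_div_two_of_even (Nat.even_mul_succ_self x)
  rcases k with _ | j
  · simp
  · have hmk := two_mul_triangle (m + (j + 1))
    have hm := two_mul_triangle m
    have hj := two_mul_triangle j
    rw [Nat.add_sub_cancel, show m + (j + 1) - 1 = m + j by omega, mul_comm (j + 1) j]
    apply Nat.eq_of_mul_eq_mul_left two_pos
    zify at hmk hm hj ⊢
    linear_combination hmk - hm + hj

theorem neg_one_pow_triangle_sub {R : Type*} [Monoid R] [HasDistribNeg R] {n k : ℕ}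
    (hkn : k ≤ n) :
    (-1 : R) ^ (n * (n + 1) / 2) * (-1) ^ n * (-1) ^ (k * (k - 1) / 2) =
      (-1) ^ ((n - k) * (n - k + 1) / 2) * (-1) ^ (n - k) * (-1) ^ (k * (n - 1)) := by
  obtain ⟨m, rfl⟩ := Nat.exists_eq_add_of_le' hkn
  rw [← pow_add, ← pow_add, ← pow_add, ← pow_add, Nat.add_sub_cancel,
    triangle_add_exponent, pow_add _ _ (2 * k), pow_mul, neg_one_sq, one_pow, mul_one]

theorem strictMono_of_val_eq_sub_rev {k m m' N : ℕ} {c : Fin k → Fin m} (hc : StrictMono c)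
    (hN : ∀ s, (c s : ℕ) ≤ N) {f : Fin k → Fin m'} (hf : ∀ s, (f s : ℕ) = N - c s.rev) :
    StrictMono f := by
  intro a b hab
  have hcab : c b.rev < c a.rev := hc (Fin.rev_lt_rev.mpr hab)
  have := hN a.rev
  rw [Fin.lt_def, hf, hf]
  rw [Fin.lt_def] at hcab
  omega

def reflectFace {k : ℕ} (n : ℕ) (c : Fin k → Fin (n + 1)) : Fin k → Fin (n + 1) :=
  fun s => ⟨n - 1 - c s.rev, by omega⟩

/-- The index set `0 ≤ i₁ < ⋯ < i_k ≤ n - 1` of the sum `d₁^k`. -/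
def faceIndices (n k : ℕ) : Finset (Fin k → Fin (n + 1)) :=
  Finset.univ.filter fun c : Fin k → Fin (n + 1) => StrictMono c ∧ ∀ s, (c s : ℕ) < n

section reflectFace

variable {n k : ℕ} {c : Fin k → Fin (n + 1)}

theorem mem_faceIndices :
    c ∈ faceIndices n k ↔ StrictMono c ∧ ∀ s, (c s : ℕ) < n := by
  simp only [faceIndices, Finset.mem_filter, Finset.mem_univ, true_and]

theorem reflectFace_mem_faceIndices (hc : c ∈ faceIndices n k) :
    reflectFace n c ∈ faceIndices n k := by
  rw [mem_faceIndices] at hc ⊢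
  refine ⟨strictMono_of_val_eq_sub_rev hc.1 (fun s => ?_) fun s => rfl, fun s => ?_⟩
  · exact Nat.le_sub_one_of_lt (hc.2 s)
  · have := hc.2 s.rev
    simp only [reflectFace]
    omega

theorem reflectFace_reflectFace (hc : ∀ s, (c s : ℕ) < n) :
    reflectFace n (reflectFace n c) = c := by
  funext s
  have := hc s
  ext
  simp only [reflectFace, Fin.rev_rev]
  omega

theorem sum_reflectFace_add_sum (hc : ∀ s, (c s : ℕ) < n) :
    ∑ s, (reflectFace n c s : ℕ) + ∑ s, (c s : ℕ) = k * (n - 1) := by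
  rw [← Equiv.sum_comp Fin.revPerm, ← Finset.sum_add_distrib]
  have hsummand (s : Fin k) : (reflectFace n c (Fin.revPerm s) : ℕ) + c s = n - 1 := by
    have := hc s
    simp only [reflectFace, Fin.revPerm_apply, Fin.rev_rev]
    omega
  simp only [hsummand, Finset.sum_const, Finset.card_univ, Fintype.card_fin, smul_eq_mul]

theorem neg_one_pow_sum_reflectFace {R : Type*} [Monoid R] [HasDistribNeg R]
    (hc : ∀ s, (c s : ℕ) < n) :
    (-1 : R) ^ ∑ s, (reflectFace n c s : ℕ) = (-1) ^ (k * (n - 1)) * (-1) ^ ∑ s, (c s : ℕ) := by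
  rw [← sum_reflectFace_add_sum hc, ← pow_add, add_assoc, ← two_mul, pow_add, pow_mul,
    neg_one_sq, one_pow, mul_one]

end reflectFace

theorem face_comp_reflection_comp_rotation {K : Type*} [CommRing K] {X : ℕ → Type*}
    [∀ n, AddCommGroup (X n)] [∀ n, Module K (X n)] (t r : ∀ n, Module.End K (X n))
    (F : ∀ n k : ℕ, (Fin k → Fin (n + 1)) → (X n →ₗ[K] X (n - k))) {n k : ℕ} (hk : 1 ≤ k)
    (htpos : ∀ c : Fin k → Fin (n + 1), StrictMono c → 0 < (c ⟨0, hk⟩ : ℕ) →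
      (F n k c).comp (t n : X n →ₗ[K] X n) =
        (t (n - k) : X (n - k) →ₗ[K] X (n - k)).comp
          (F n k (fun s => ⟨(c s : ℕ) - 1, (Nat.sub_le _ _).trans_lt (c s).isLt⟩)))
    (hrel : ∀ c : Fin k → Fin (n + 1), StrictMono c →
      (F n k c).comp (r n : X n →ₗ[K] X n) =
        ((-1 : K) ^ (k * (k - 1) / 2)) •
          ((r (n - k) : X (n - k) →ₗ[K] X (n - k)).comp
            (F n k (fun s => ⟨n - (c s.rev : ℕ), Nat.lt_succ_of_le (Nat.sub_le _ _)⟩))))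
    {c : Fin k → Fin (n + 1)} (hc : StrictMono c) (hlt : ∀ s, (c s : ℕ) < n) :
    (F n k c).comp ((r n).comp (t n)) =
      ((-1 : K) ^ (k * (k - 1) / 2)) •
        (r (n - k)).comp ((t (n - k)).comp (F n k (reflectFace n c))) := by
  rw [← LinearMap.comp_assoc, hrel c hc, LinearMap.smul_comp, LinearMap.comp_assoc, htpos]
  · congr 4
    funext s
    ext
    simp only [reflectFace]
    omega
  · exact strictMono_of_val_eq_sub_rev hc (fun s => (hlt s).le) fun _ => rfl
  · exact Nat.sub_pos_of_lt (hlt _)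

-- `F n k c` is the face `∂_(c 0, …, c (k-1))`, with the internal grading collapsed.
/-- In a dihedral module with ∞-simplicial faces, with
`d₁^k = ∑_{0≤i₁<⋯<i_k≤n-1} (-1)^{i₁+⋯+i_k} ∂_(i₁,…,i_k) : X_{n,•} → X_{n-k,•+k-1}`,
`T_n = (-1)^n t_n` and `R_n = (-1)^{n(n+1)/2} r_n`, one has
`d₁^k ∘ (R_n T_n) = (R_{n-k} T_{n-k}) ∘ d₁^k` (`k ≥ 1`, `n ≥ 1`).
Here `F n k c` stands for the face `∂_(c 0, …, c (k-1))`, internal grading collapsed. -/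
theorem stmt9 {K : Type*} [CommRing K] {X : ℕ → Type*}
    [∀ n, AddCommGroup (X n)] [∀ n, Module K (X n)]
    (t r : ∀ n, Module.End K (X n))
    (F : ∀ n k : ℕ, (Fin k → Fin (n + 1)) → (X n →ₗ[K] X (n - k)))
    (n k : ℕ) (hk : 1 ≤ k) (hkn : k ≤ n)
    -- relation (1.2), case `i₁ > 0` : `∂_(i₁,…,i_k) t_n = t_{n-k} ∂_(i₁-1,…,i_k-1)`
    (htpos : ∀ c : Fin k → Fin (n + 1), StrictMono c → 0 < (c ⟨0, hk⟩ : ℕ) →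
      (F n k c).comp (t n : X n →ₗ[K] X n) =
        (t (n - k) : X (n - k) →ₗ[K] X (n - k)).comp
          (F n k (fun s => ⟨(c s : ℕ) - 1, by have := (c s).isLt; omega⟩)))
    -- relation (1.3) : `∂_(i₁,…,i_k) r_n = (-1)^{k(k-1)/2} r_{n-k} ∂_(n-i_k,…,n-i₁)`
    (hrel : ∀ c : Fin k → Fin (n + 1), StrictMono c →
      (F n k c).comp (r n : X n →ₗ[K] X n) =
        ((-1 : K) ^ (k * (k - 1) / 2)) •
          ((r (n - k) : X (n - k) →ₗ[K] X (n - k)).comp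
            (F n k (fun s => ⟨n - (c s.rev : ℕ), by omega⟩)))) :
    (∑ c ∈ Finset.univ.filter
        (fun c : Fin k → Fin (n + 1) => StrictMono c ∧ ∀ s, (c s : ℕ) < n),
        ((-1 : K) ^ (∑ s : Fin k, (c s : ℕ))) • F n k c).comp
      (((((-1 : K) ^ (n * (n + 1) / 2)) • r n) * (((-1 : K) ^ n) • t n) :
          Module.End K (X n)) : X n →ₗ[K] X n) =
    (((((-1 : K) ^ ((n - k) * ((n - k) + 1) / 2)) • r (n - k)) *
          (((-1 : K) ^ (n - k)) • t (n - k)) :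
          Module.End K (X (n - k))) : X (n - k) →ₗ[K] X (n - k)).comp
      (∑ c ∈ Finset.univ.filter
        (fun c : Fin k → Fin (n + 1) => StrictMono c ∧ ∀ s, (c s : ℕ) < n),
        ((-1 : K) ^ (∑ s : Fin k, (c s : ℕ))) • F n k c) := by
  rw [smul_mul_smul, smul_mul_smul, Module.End.mul_eq_comp, Module.End.mul_eq_comp,
    LinearMap.finsetSum_comp, LinearMap.comp_finsetSum]
  refine Finset.sum_nbij' (reflectFace n) (reflectFace n) (fun _ => reflectFace_mem_faceIndices)
    (fun _ => reflectFace_mem_faceIndices)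
    (fun _ hc => reflectFace_reflectFace (mem_faceIndices.mp hc).2)
    (fun _ hc => reflectFace_reflectFace (mem_faceIndices.mp hc).2) fun c hc => ?_
  obtain ⟨hmono, hlt⟩ := mem_faceIndices.mp hc
  rw [LinearMap.smul_comp, LinearMap.comp_smul,
    face_comp_reflection_comp_rotation t r F hk htpos hrel hmono hlt, LinearMap.comp_smul,
    LinearMap.smul_comp, smul_smul, smul_smul, smul_smul, neg_one_pow_sum_reflectFace hlt,
    LinearMap.comp_assoc]
  congr 1
  linear_combination ((-1 : K) ^ ∑ s, (c s : ℕ)) * neg_one_pow_triangle_sub (R := K) hkn
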